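/- Let r ≥ 1, let d ≥ r, and let p₀, …, p_r ∈ ℂ[x] be linearly independent polynomials, each of degree at most d. Then the set of points s ∈ ℂ at which the vectors (p₀(s), …, p_r(s)) and (p₀′(s), …, p_r′(s)) in ℂ^{r+1} are linearly dependent is finite, and its cardinality N satisfies r·N ≤ (r+1)(d−r). (In particular, a rational curve of degree d in ℙ^r has at most (r+1)(d−r)/r cusps.) -/

import Mathlib

/-!
The Wronskian `W = det (p_j^{(i)})` of the family changes by a nonzero constant factor under
a change of basis of `span p`. In a basis with strictly increasing degrees, its coefficient of
degree `∑ deg - ∑ i` is a Vandermonde-type determinant times the leading coefficients, so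
`W ≠ 0` and `deg W ≤ (r+1)(d-r)`. At a cusp `s` the vectors `(f(s), f'(s))`, `f ∈ span p`,
lie on a line, so a basis of `span p` with distinct vanishing orders at `s` cannot contain
both order `0` and order `1`; the orders are then at least `0, 2, 3, …, r+1`, and `W`
vanishes to order at least `r` at `s`. Counting the roots of `W` with multiplicity gives
`r N ≤ deg W`.

Bases with distinct degrees (or distinct orders at `s`) exist because a nonzero polynomial is
detected by its coefficient at its pivot (the degree, or the order at `s`), so a subspace has
at least as many pivots as its dimension.
-/

open Polynomial Finset Module

namespace Fin

variable {n : ℕ}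

theorem sum_tsub_perm_eq (e : Fin n → ℕ) (σ : Equiv.Perm (Fin n))
    (h : ∀ i, (σ i : ℕ) ≤ e i) :
    ∑ i, (e i - σ i) = ∑ i, e i - ∑ i : Fin n, (i : ℕ) := by
  rw [sum_tsub_distrib _ fun i _ => h i, Equiv.sum_comp σ fun i : Fin n => (i : ℕ)]

theorem add_sub_le_of_strictMono {e : Fin n → ℕ} (he : StrictMono e) {i j : Fin n}
    (hij : i ≤ j) : e i + (j - i) ≤ e j := by
  have hcard := card_le_card_of_injOn (s := Icc i j) (t := Icc (e i) (e j)) e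
    (fun x hx => by
      simp only [coe_Icc, Set.mem_Icc] at hx ⊢
      exact ⟨he.monotone hx.1, he.monotone hx.2⟩)
    he.injective.injOn
  rw [card_Icc, Nat.card_Icc] at hcard
  have := he.monotone hij
  omega

theorem sum_le_of_strictMono {d : ℕ} {e : Fin n → ℕ} (he : StrictMono e)
    (hd : ∀ j, e j ≤ d) : ∑ j, e j ≤ ∑ j : Fin n, (j : ℕ) + n * (d + 1 - n) := by
  have hle : ∀ j : Fin n, e j ≤ j + (d + 1 - n) := fun j => by
    have hj := j.isLt
    have hgap := add_sub_le_of_strictMono he (i := j) (j := ⟨n - 1, by omega⟩)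
      (mk_le_mk.2 (by omega))
    have := hd ⟨n - 1, by omega⟩
    simp only at hgap
    omega
  calc ∑ j, e j ≤ ∑ j : Fin n, ((j : ℕ) + (d + 1 - n)) := sum_le_sum fun j _ => hle j
    _ = ∑ j : Fin n, (j : ℕ) + n * (d + 1 - n) := by simp [sum_add_distrib]

theorem add_sum_le_sum_of_strictMono {r : ℕ} {e : Fin (r + 1) → ℕ} (he : StrictMono e)
    (h01 : e 0 = 0 → ∀ j, e j ≠ 1) : r + ∑ j : Fin (r + 1), (j : ℕ) ≤ ∑ j, e j := by
  have hsucc : ∀ i : Fin r, (i : ℕ) + 2 ≤ e i.succ := fun i => by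
    have hgap := add_sub_le_of_strictMono he
      (succ_le_succ_iff.2 (mk_le_mk.2 (Nat.zero_le i)) : succ ⟨0, i.pos⟩ ≤ i.succ)
    have h0 := he (succ_pos ⟨0, i.pos⟩)
    have h1 : e (succ ⟨0, i.pos⟩) ≠ 1 := fun h => h01 (by omega) _ h
    simp only [val_succ] at hgap
    omega
  rw [sum_univ_succ, sum_univ_succ]
  calc r + (((0 : Fin (r + 1)) : ℕ) + ∑ i : Fin r, ((i.succ : Fin (r + 1)) : ℕ))
      = ∑ i : Fin r, ((i : ℕ) + 2) := by simp [sum_add_distrib]; omega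
    _ ≤ e 0 + ∑ i : Fin r, e i.succ := le_add_left (sum_le_sum fun i _ => hsucc i)

end Fin

theorem Matrix.det_descFactorial_ne_zero {R : Type*} [CommRing R] [IsDomain R] [CharZero R]
    {n : ℕ} {e : Fin n → ℕ} (he : Function.Injective e) :
    (of fun i j : Fin n => ((e j).descFactorial i : R)).det ≠ 0 := by
  have hpoch : (of fun i j : Fin n => ((e j).descFactorial i : R)) =
      (of fun j i : Fin n => (descPochhammer R i).eval (e j : R)).transpose := by
    ext i j
    simp [descPochhammer_eval_eq_descFactorial]
  rw [hpoch, det_transpose, ← det_eval_matrixOfPolynomials_eq_det_vandermonde _ _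
    (fun i => descPochhammer_natDegree R i) (fun i => monic_descPochhammer R i),
    det_vandermonde_ne_zero_iff]
  exact Nat.cast_injective.comp he

namespace Polynomial

variable {R : Type*} [CommRing R]

theorem coeff_prod_sum_of_natDegree_le {ι : Type*} (s : Finset ι) (f : ι → R[X]) (m : ι → ℕ)
    (h : ∀ i ∈ s, (f i).natDegree ≤ m i) :
    (∏ i ∈ s, f i).coeff (∑ i ∈ s, m i) = ∏ i ∈ s, (f i).coeff (m i) := by
  classical
  induction s using Finset.induction_on with
  | empty => simp
  | insert a s ha ih =>
    rw [prod_insert ha, sum_insert ha, prod_insert ha, coeff_mul_add_eq_of_natDegree_le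
      (h a (mem_insert_self a s)), ih fun i hi => h i (mem_insert_of_mem hi)]
    exact (natDegree_prod_le _ _).trans (sum_le_sum fun i hi => h i (mem_insert_of_mem hi))

theorem coeff_iterate_derivative_natDegree_sub (f : R[X]) (k : ℕ) :
    (derivative^[k] f).coeff (f.natDegree - k) =
      (f.natDegree.descFactorial k : R) * f.leadingCoeff := by
  rw [coeff_iterate_derivative, nsmul_eq_mul]
  rcases le_or_gt k f.natDegree with hk | hk
  · rw [Nat.sub_add_cancel hk, leadingCoeff]
  · rw [Nat.descFactorial_eq_zero_iff_lt.2 hk, coeff_eq_zero_of_natDegree_lt (by omega)]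
    simp

theorem coeff_taylor_rootMultiplicity_ne_zero {f : R[X]} (hf : f ≠ 0) (s : R) :
    (taylor s f).coeff (rootMultiplicity s f) ≠ 0 := by
  rw [rootMultiplicity_eq_natTrailingDegree, ← taylor_apply]
  exact trailingCoeff_nonzero_iff_nonzero.2 ((taylor_eq_zero s f).not.2 hf)

theorem coeff_taylor_eq_zero_of_lt_rootMultiplicity {f : R[X]} {s : R} {k : ℕ}
    (hk : k < rootMultiplicity s f) : (taylor s f).coeff k = 0 := by
  rw [rootMultiplicity_eq_natTrailingDegree, ← taylor_apply] at hk
  exact coeff_eq_zero_of_lt_natTrailingDegree hk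

theorem natDegree_le_of_mem_span {n d : ℕ} {p : Fin n → R[X]} (hp : ∀ j, (p j).natDegree ≤ d)
    {f : R[X]} (hf : f ∈ Submodule.span R (Set.range p)) : f.natDegree ≤ d := by
  have hle : Submodule.span R (Set.range p) ≤ degreeLE R d :=
    Submodule.span_le.2 <| Set.range_subset_iff.2 fun j =>
      mem_degreeLE.2 (degree_le_of_natDegree_le (hp j))
  exact natDegree_le_iff_degree_le.2 (mem_degreeLE.1 (hle hf))

theorem finite_and_mul_ncard_le_natDegree [IsDomain R] {f : R[X]} (hf : f ≠ 0) {r : ℕ}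
    (hr : 1 ≤ r) {S : Set R} (hS : ∀ s ∈ S, (X - C s) ^ r ∣ f) :
    S.Finite ∧ r * S.ncard ≤ f.natDegree := by
  classical
  have hmult : ∀ s ∈ S, r ≤ rootMultiplicity s f :=
    fun s hs => (le_rootMultiplicity_iff hf).2 (hS s hs)
  have hsub : S ⊆ f.roots.toFinset := fun s hs => by
    simpa [hf] using (rootMultiplicity_pos hf).1 (Nat.lt_of_lt_of_le hr (hmult s hs))
  have hfin : S.Finite := (finite_toSet _).subset hsub
  refine ⟨hfin, ?_⟩
  calc r * S.ncard = ∑ _s ∈ hfin.toFinset, r := by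
        rw [sum_const, smul_eq_mul, mul_comm, Set.ncard_eq_toFinset_card S hfin]
    _ ≤ ∑ s ∈ hfin.toFinset, f.roots.count s :=
        sum_le_sum fun s hs => count_roots f ▸ hmult s (hfin.mem_toFinset.1 hs)
    _ ≤ ∑ s ∈ f.roots.toFinset, f.roots.count s := sum_le_sum_of_subset (by simpa using hsub)
    _ = Multiset.card f.roots := Multiset.toFinset_sum_count_eq _
    _ ≤ f.natDegree := card_roots' f

end Polynomial

section Wronskian

variable {R : Type*} [CommRing R] {n : ℕ}

noncomputable def wronskianMatrix (p : Fin n → R[X]) : Matrix (Fin n) (Fin n) R[X] :=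
  Matrix.of fun i j => derivative^[i] (p j)

noncomputable def wronskianDet (p : Fin n → R[X]) : R[X] :=
  (wronskianMatrix p).det

theorem wronskianMatrix_sum_smul (p : Fin n → R[X]) (A : Matrix (Fin n) (Fin n) R) :
    wronskianMatrix (fun j => ∑ k, A k j • p k) = wronskianMatrix p * A.map C := by
  ext i j : 1
  simp only [wronskianMatrix, Matrix.of_apply, Matrix.mul_apply, Matrix.map_apply,
    iterate_derivative_sum, iterate_derivative_smul]
  simp only [smul_eq_C_mul, mul_comm]

theorem wronskianDet_dvd_of_mem_span {p q : Fin n → R[X]}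
    (h : ∀ j, q j ∈ Submodule.span R (Set.range p)) : wronskianDet p ∣ wronskianDet q := by
  choose A hA using fun j => (Submodule.mem_span_range_iff_exists_fun R).1 (h j)
  have hq : q = fun j => ∑ k, (Matrix.of A).transpose k j • p k := funext fun j => (hA j).symm
  simp only [hq, wronskianDet, wronskianMatrix_sum_smul, Matrix.det_mul]
  exact dvd_mul_right _ _

theorem pow_dvd_wronskianDet (s : R) (p : Fin n → R[X]) (m : Fin n → ℕ)
    (h : ∀ j, (X - C s) ^ m j ∣ p j) :
    (X - C s) ^ (∑ j, m j - ∑ j : Fin n, (j : ℕ)) ∣ wronskianDet p := by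
  rw [wronskianDet, Matrix.det_apply']
  refine dvd_sum fun σ _ => dvd_mul_of_dvd_right ?_ _
  calc (X - C s) ^ (∑ j, m j - ∑ j : Fin n, (j : ℕ))
      ∣ ∏ j, (X - C s) ^ (m j - σ j) := by
        rw [prod_pow_eq_pow_sum, ← Equiv.sum_comp σ fun j : Fin n => (j : ℕ)]
        refine pow_dvd_pow _ (tsub_le_iff_right.2 ?_)
        rw [← sum_add_distrib]
        exact sum_le_sum fun j _ => le_tsub_add
    _ ∣ ∏ j, wronskianMatrix p (σ j) j :=
        prod_dvd_prod_of_dvd _ _ fun j _ => pow_sub_dvd_iterate_derivative_of_pow_dvd _ (h j)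

theorem natDegree_wronskianDet_le (p : Fin n → R[X]) :
    (wronskianDet p).natDegree ≤ ∑ j, (p j).natDegree - ∑ j : Fin n, (j : ℕ) := by
  rw [wronskianDet, Matrix.det_apply']
  refine natDegree_sum_le_of_forall_le _ _ fun σ _ => natDegree_mul_le.trans ?_
  rw [natDegree_intCast, zero_add]
  by_cases hσ : ∀ i, (σ i : ℕ) ≤ (p i).natDegree
  · rw [← Fin.sum_tsub_perm_eq _ σ hσ]
    exact (natDegree_prod_le _ _).trans (sum_le_sum fun i _ => natDegree_iterate_derivative _ _)
  · push Not at hσ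
    obtain ⟨i, hi⟩ := hσ
    rw [prod_eq_zero (mem_univ i) (iterate_derivative_eq_zero hi), natDegree_zero]
    exact Nat.zero_le _

theorem coeff_wronskianDet (p : Fin n → R[X]) :
    (wronskianDet p).coeff (∑ j, (p j).natDegree - ∑ j : Fin n, (j : ℕ)) =
      (Matrix.of fun i j : Fin n => ((p j).natDegree.descFactorial i : R)).det *
        ∏ j, (p j).leadingCoeff := by
  rw [wronskianDet, Matrix.det_apply', finsetSum_coeff, Matrix.det_apply', sum_mul]
  refine sum_congr rfl fun σ _ => ?_
  rw [coeff_intCast_mul, mul_assoc, ← prod_mul_distrib]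
  congr 1
  by_cases hσ : ∀ i, (σ i : ℕ) ≤ (p i).natDegree
  · rw [← Fin.sum_tsub_perm_eq _ σ hσ]
    exact (coeff_prod_sum_of_natDegree_le _ _ _ fun i _ => natDegree_iterate_derivative _ _).trans
      (prod_congr rfl fun i _ => coeff_iterate_derivative_natDegree_sub _ _)
  · push Not at hσ
    obtain ⟨i, hi⟩ := hσ
    rw [prod_eq_zero (mem_univ i) (iterate_derivative_eq_zero hi), coeff_zero,
      prod_eq_zero (mem_univ i) (by simp [Nat.descFactorial_eq_zero_iff_lt.2 hi])]

theorem wronskianDet_ne_zero [IsDomain R] [CharZero R] {p : Fin n → R[X]} (hp : ∀ j, p j ≠ 0)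
    (hinj : Function.Injective fun j => (p j).natDegree) : wronskianDet p ≠ 0 := by
  intro h
  have hcoeff := coeff_wronskianDet p
  rw [h, coeff_zero, eq_comm] at hcoeff
  exact mul_ne_zero (Matrix.det_descFactorial_ne_zero hinj)
    (prod_ne_zero_iff.2 fun j _ => leadingCoeff_ne_zero.2 (hp j)) hcoeff

end Wronskian

section Pivot

variable {K M : Type*} [Field K] [AddCommGroup M] [Module K M]

theorem finrank_le_card_of_pivot (V : Submodule K M) (φ : ℕ → M →ₗ[K] K) (v : M → ℕ)
    (hv : ∀ f ∈ V, f ≠ 0 → φ (v f) f ≠ 0) (T : Finset ℕ) (hT : ∀ f ∈ V, f ≠ 0 → v f ∈ T) :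
    finrank K V ≤ #T := by
  let L : V →ₗ[K] T → K := LinearMap.pi fun k => (φ k).comp V.subtype
  have hL : Function.Injective L := by
    refine (injective_iff_map_eq_zero L).2 fun f hf => ?_
    by_contra hf0
    have hf0' : (f : M) ≠ 0 := by simpa using hf0
    exact hv f f.2 hf0' (congrFun hf ⟨v f, hT f f.2 hf0'⟩)
  simpa using L.finrank_le_finrank_of_injective hL

theorem exists_strictMono_of_pivot (V : Submodule K M) (φ : ℕ → M →ₗ[K] K) (v : M → ℕ)
    (hv : ∀ f ∈ V, f ≠ 0 → φ (v f) f ≠ 0) (B : ℕ) (hB : ∀ f ∈ V, f ≠ 0 → v f ≤ B) {m : ℕ}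
    (hm : m ≤ finrank K V) :
    ∃ g : Fin m → M, (∀ j, g j ∈ V ∧ g j ≠ 0) ∧ StrictMono (v ∘ g) := by
  classical
  let T := (range (B + 1)).filter fun k => ∃ f ∈ V, f ≠ 0 ∧ v f = k
  have hT : m ≤ #T := hm.trans <| finrank_le_card_of_pivot V φ v hv T fun f hf hf0 =>
    mem_filter.2 ⟨mem_range.2 (Nat.lt_succ_of_le (hB f hf hf0)), f, hf, hf0, rfl⟩
  obtain ⟨T', hT'T, hT'⟩ := exists_subset_card_eq hT
  choose g hgV hg0 hgv using fun j => (mem_filter.1 (hT'T (T'.orderEmbOfFin_mem hT' j))).2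
  refine ⟨g, fun j => ⟨hgV j, hg0 j⟩, fun a b hab => ?_⟩
  simpa only [Function.comp_apply, hgv] using (T'.orderEmbOfFin hT').strictMono hab

theorem linearIndependent_of_strictMono_pivot (φ : ℕ → M →ₗ[K] K) (v : M → ℕ) {m : ℕ}
    (g : Fin m → M) (hg : StrictMono (v ∘ g)) (hpiv : ∀ j, φ (v (g j)) (g j) ≠ 0)
    (hlow : ∀ j, ∀ k < v (g j), φ k (g j) = 0) : LinearIndependent K g := by
  let A : Matrix (Fin m) (Fin m) K := Matrix.of fun i j => φ (v (g i)) (g j)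
  have hA : A.det ≠ 0 := by
    rw [Matrix.det_of_isLowerTriangular A fun i j hij => hlow j _ (hg hij)]
    exact prod_ne_zero_iff.2 fun j _ => hpiv j
  exact LinearIndependent.of_comp (LinearMap.pi fun i => φ (v (g i)))
    (Matrix.linearIndependent_cols_of_det_ne_zero hA)

end Pivot

section PolynomialSubspace

variable {K : Type*} [Field K] {n : ℕ}

theorem exists_strictMono_natDegree (V : Submodule K K[X]) {d : ℕ}
    (hV : ∀ f ∈ V, f.natDegree ≤ d) {m : ℕ} (hm : m ≤ finrank K V) :
    ∃ g : Fin m → K[X], (∀ j, g j ∈ V ∧ g j ≠ 0) ∧ StrictMono fun j => (g j).natDegree :=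
  exists_strictMono_of_pivot V (lcoeff K) natDegree
    (fun _ _ hf => leadingCoeff_ne_zero.2 hf) d (fun f hf _ => hV f hf) hm

theorem exists_linearIndependent_strictMono_rootMultiplicity (V : Submodule K K[X]) {d : ℕ}
    (hV : ∀ f ∈ V, f.natDegree ≤ d) (s : K) {m : ℕ} (hm : m ≤ finrank K V) :
    ∃ g : Fin m → K[X], (∀ j, g j ∈ V ∧ g j ≠ 0) ∧
      StrictMono (fun j => rootMultiplicity s (g j)) ∧ LinearIndependent K g := by
  let φ : ℕ → K[X] →ₗ[K] K := fun k => (lcoeff K k).comp (taylor s)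
  have hpiv : ∀ f : K[X], f ≠ 0 → φ (rootMultiplicity s f) f ≠ 0 :=
    fun f hf => coeff_taylor_rootMultiplicity_ne_zero hf s
  have hB : ∀ f ∈ V, f ≠ 0 → rootMultiplicity s f ≤ d := fun f hf _ => by
    rw [rootMultiplicity_eq_natTrailingDegree, ← taylor_apply]
    exact (natTrailingDegree_le_natDegree _).trans ((natDegree_taylor f s).trans_le (hV f hf))
  obtain ⟨g, hg, hmono⟩ :=
    exists_strictMono_of_pivot V φ (rootMultiplicity s) (fun f _ => hpiv f) d hB hm
  exact ⟨g, hg, hmono, linearIndependent_of_strictMono_pivot φ _ g hmono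
    (fun j => hpiv _ (hg j).2) fun j _ hk => coeff_taylor_eq_zero_of_lt_rootMultiplicity hk⟩

theorem wronskianDet_ne_zero_and_natDegree_le [CharZero K] {d : ℕ} {p : Fin n → K[X]}
    (hp : LinearIndependent K p) (hdeg : ∀ j, (p j).natDegree ≤ d) :
    wronskianDet p ≠ 0 ∧ (wronskianDet p).natDegree ≤ n * (d + 1 - n) := by
  have hV : ∀ f ∈ Submodule.span K (Set.range p), f.natDegree ≤ d :=
    fun f => natDegree_le_of_mem_span hdeg
  obtain ⟨q, hq, hmono⟩ :=
    exists_strictMono_natDegree _ hV (by simpa using (finrank_span_eq_card hp).ge)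
  obtain ⟨c, hc⟩ := wronskianDet_dvd_of_mem_span fun j => (hq j).1
  have hq0 : wronskianDet q ≠ 0 := wronskianDet_ne_zero (fun j => (hq j).2) hmono.injective
  refine ⟨left_ne_zero_of_mul (hc ▸ hq0), ?_⟩
  calc (wronskianDet p).natDegree ≤ (wronskianDet q).natDegree :=
        natDegree_le_of_dvd ⟨c, hc⟩ hq0
    _ ≤ ∑ j, (q j).natDegree - ∑ j : Fin n, (j : ℕ) := natDegree_wronskianDet_le q
    _ ≤ n * (d + 1 - n) :=
        tsub_le_iff_left.2 (Fin.sum_le_of_strictMono hmono fun j => hV _ (hq j).1)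

def HasCuspAt (p : Fin n → K[X]) (s : K) : Prop :=
  ¬ LinearIndependent K ![fun j => eval s (p j), fun j => eval s (derivative (p j))]

theorem HasCuspAt.rootMultiplicity_ne_one {p : Fin n → K[X]} {s : K} (hs : HasCuspAt p s)
    {f g : K[X]} (hf : f ∈ Submodule.span K (Set.range p)) (hfs : ¬ f.IsRoot s)
    (hg : g ∈ Submodule.span K (Set.range p)) : rootMultiplicity s g ≠ 1 := by
  intro hg1
  obtain ⟨a, b, hab, hne⟩ : ∃ a b : K, a • (fun j => eval s (p j)) +
      b • (fun j => eval s (derivative (p j))) = 0 ∧ ¬ (a = 0 ∧ b = 0) := by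
    simpa [HasCuspAt, LinearIndependent.pair_iff] using hs
  let ℓ : K[X] →ₗ[K] K := a • leval s + b • (leval s).comp derivative
  have hℓ : Submodule.span K (Set.range p) ≤ LinearMap.ker ℓ :=
    Submodule.span_le.2 <| Set.range_subset_iff.2 fun j => by simpa [ℓ] using congrFun hab j
  have hg0 : g ≠ 0 := by rintro rfl; simp at hg1
  have hgs : g.IsRoot s := (rootMultiplicity_pos hg0).1 (by omega)
  have hg's : ¬ (derivative g).IsRoot s := fun h =>
    ((one_lt_rootMultiplicity_iff_isRoot hg0).2 ⟨hgs, h⟩).ne' hg1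
  have hℓf : a * eval s f + b * eval s (derivative f) = 0 := by simpa [ℓ] using hℓ hf
  have hℓg : b * eval s (derivative g) = 0 := by simpa [ℓ, hgs.eq_zero] using hℓ hg
  have hb : b = 0 := (mul_eq_zero.1 hℓg).resolve_right hg's
  exact hne ⟨(mul_eq_zero.1 (by simpa [hb] using hℓf)).resolve_right hfs, hb⟩

theorem HasCuspAt.pow_dvd_wronskianDet {r : ℕ} {p : Fin (r + 1) → K[X]} {s : K}
    (hp : LinearIndependent K p) (hs : HasCuspAt p s) : (X - C s) ^ r ∣ wronskianDet p := by
  set V := Submodule.span K (Set.range p)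
  have : FiniteDimensional K V := FiniteDimensional.span_of_finite K (Set.finite_range p)
  have hrank : finrank K V = r + 1 := by simpa using finrank_span_eq_card hp
  have hV : ∀ f ∈ V, f.natDegree ≤ univ.sup fun j => (p j).natDegree :=
    fun f => natDegree_le_of_mem_span fun j =>
      le_sup (f := fun j => (p j).natDegree) (mem_univ j)
  obtain ⟨g, hg, hmono, hgli⟩ :=
    exists_linearIndependent_strictMono_rootMultiplicity V hV s hrank.ge
  have hspan : Submodule.span K (Set.range g) = V :=
    Submodule.eq_of_le_of_finrank_le
      (Submodule.span_le.2 (Set.range_subset_iff.2 fun j => (hg j).1))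
      (by rw [hrank, finrank_span_eq_card hgli, Fintype.card_fin])
  have hsum := Fin.add_sum_le_sum_of_strictMono hmono fun h0 j =>
    hs.rootMultiplicity_ne_one (hg 0).1
      (fun hroot => ((rootMultiplicity_pos (hg 0).2).2 hroot).ne' h0) (hg j).1
  calc (X - C s) ^ r
      ∣ (X - C s) ^ (∑ j, rootMultiplicity s (g j) - ∑ j : Fin (r + 1), (j : ℕ)) :=
        pow_dvd_pow _ (le_tsub_of_add_le_right hsum)
    _ ∣ wronskianDet g := _root_.pow_dvd_wronskianDet s g _ fun j => pow_rootMultiplicity_dvd _ _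
    _ ∣ wronskianDet p :=
        wronskianDet_dvd_of_mem_span fun j => hspan ▸ Submodule.subset_span ⟨j, rfl⟩

end PolynomialSubspace

theorem cusp_count_bound_general (r d : ℕ) (hr : 1 ≤ r)
    (p : Fin (r + 1) → Polynomial ℂ)
    (hind : LinearIndependent ℂ p)
    (hdeg : ∀ j, (p j).natDegree ≤ d) :
    {s : ℂ | ¬ LinearIndependent ℂ
        ![fun j => eval s (p j), fun j => eval s (derivative (p j))]}.Finite ∧
    r * {s : ℂ | ¬ LinearIndependent ℂ
        ![fun j => eval s (p j), fun j => eval s (derivative (p j))]}.ncard ≤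
      (r + 1) * (d - r) := by
  obtain ⟨hW0, hWdeg⟩ := wronskianDet_ne_zero_and_natDegree_le hind hdeg
  obtain ⟨hfin, hcard⟩ := finite_and_mul_ncard_le_natDegree hW0 hr (S := {s | HasCuspAt p s})
    fun s hs => hs.pow_dvd_wronskianDet hind
  exact ⟨hfin, hcard.trans (hWdeg.trans_eq (by rw [Nat.add_sub_add_right]))⟩

/-- Let `p₀, …, p_r` be linearly independent complex polynomials of degree at most `d`
(with `1 ≤ r ≤ d`).  The set of points `s` at which the vectors `(p₀(s), …, p_r(s))`
and `(p₀′(s), …, p_r′(s))` are linearly dependent is finite, of cardinality `N` with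
`r·N ≤ (r+1)(d−r)`: a rational curve of degree `d` in `ℙ^r` has at most `(r+1)(d−r)/r`
cusps. -/
theorem cusp_count_bound (r d : ℕ) (hr : 1 ≤ r) (hd : r ≤ d)
    (p : Fin (r + 1) → Polynomial ℂ)
    (hind : LinearIndependent ℂ p)
    (hdeg : ∀ j, (p j).natDegree ≤ d) :
    {s : ℂ | ¬ LinearIndependent ℂ
        ![fun j => eval s (p j), fun j => eval s (derivative (p j))]}.Finite ∧
    r * {s : ℂ | ¬ LinearIndependent ℂ
        ![fun j => eval s (p j), fun j => eval s (derivative (p j))]}.ncard ≤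
      (r + 1) * (d - r) :=
  cusp_count_bound_general r d hr p hind hdeg
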